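/- For integers $n \geq 2$ and $m \geq 1$ with $m$ even (resp. odd), one has $\sum_{i=1}^{n}\binom{n}{i}\sum_{0 \leq j \leq i-1,\ j \equiv m \pmod 2} \binom{j+m-1}{i-1}\binom{i-1}{j} = \sum_{i=1}^{n-1} 2^{i-1}\binom{m+i-1}{i} + \varepsilon$, where $\varepsilon = 1$ if $m$ is even and $\varepsilon = 0$ if $m$ is odd. -/

import Mathlib

/-!
Write `m = m' + 1`. Trinomial revision `C(j+m', i) C(i, j) = C(j+m', j) C(m', i-j)` followed by
Vandermonde's identity collapses the sum over `i`, leaving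
`∑_{j<n, j ≡ m} C(j+m', m') C(n+m', j+m'+1)`. Pascal's rule in `n` together with trinomial revision
turns this into `∑_{i<n} C(i+m', m') ∑_{j ≤ i, j ≡ m} C(i, j)`, and the sum of a row of Pascal's
triangle over one parity class is `2^(i-1)` for `i ≥ 1`, while for `i = 0` it is `1` or `0`
according to the parity of `m`.
-/

open Finset

lemma Finset.sum_Icc_one_eq_sum_range {M : Type*} [AddCommMonoid M] (f : ℕ → M) (n : ℕ) :
    ∑ i ∈ Icc 1 n, f i = ∑ i ∈ range n, f (i + 1) := by
  rw [← Ico_add_one_right_eq_Icc, sum_Ico_eq_sum_range]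
  simp only [Nat.add_sub_cancel, add_comm 1]

namespace Nat

lemma sum_range_choose_mul_choose_eq_choose_add (n m j : ℕ) (hj : j < n) :
    ∑ k ∈ range (n - j), n.choose (j + 1 + k) * m.choose k = (n + m).choose (j + m + 1) := by
  rw [choose_symm_of_eq_add (show n + m = (j + m + 1) + (n - j - 1) by omega), add_comm n,
    add_choose_eq, Finset.Nat.sum_antidiagonal_eq_sum_range_succ_mk,
    show (n - j - 1).succ = n - j by omega]
  refine sum_congr rfl fun k hk => ?_
  rw [mul_comm, choose_symm_of_eq_add (show n = (j + 1 + k) + (n - j - 1 - k) by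
    simp only [mem_range] at hk; omega)]

lemma sum_range_choose_succ_mul_choose_mul_choose (n m j : ℕ) :
    ∑ i ∈ range n, n.choose (i + 1) * ((j + m).choose i * i.choose j)
      = (j + m).choose m * (n + m).choose (j + m + 1) := by
  rcases le_or_gt n j with hnj | hjn
  · rw [choose_eq_zero_of_lt (by omega : n + m < j + m + 1), mul_zero]
    exact sum_eq_zero fun i hi => by
      rw [choose_eq_zero_of_lt (by simp only [mem_range] at hi; omega : i < j), mul_zero,
        mul_zero]
  have below : ∑ i ∈ Ico 0 j, n.choose (i + 1) * ((j + m).choose i * i.choose j) = 0 :=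
    sum_eq_zero fun i hi => by
      rw [choose_eq_zero_of_lt (by simp only [mem_Ico] at hi; omega : i < j), mul_zero,
        mul_zero]
  rw [range_eq_Ico, ← sum_Ico_consecutive _ (zero_le j) hjn.le, below, zero_add,
    sum_Ico_eq_sum_range, ← sum_range_choose_mul_choose_eq_choose_add n m j hjn, mul_sum,
    ← choose_symm_add]
  refine sum_congr rfl fun k _ => ?_
  rw [choose_mul (le_add_right j k), add_tsub_cancel_left, add_tsub_cancel_left, add_right_comm]
  ring

section Filter

variable (p : ℕ → Prop) [DecidablePred p]

lemma sum_choose_succ_mul_sum_filter_choose_mul_choose (m n : ℕ) :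
    ∑ i ∈ range n, n.choose (i + 1) *
        ∑ j ∈ (range (i + 1)).filter p, (j + m).choose i * i.choose j
      = ∑ j ∈ (range n).filter p, (j + m).choose m * (n + m).choose (j + m + 1) := by
  have extend : ∀ i ∈ range n, ∑ j ∈ (range (i + 1)).filter p, (j + m).choose i * i.choose j
      = ∑ j ∈ (range n).filter p, (j + m).choose i * i.choose j := fun i hi =>
    sum_subset (filter_subset_filter _ (range_subset_range.2 (by simpa using hi)))
      fun j hj hj' => by
        simp only [mem_filter, mem_range] at hj hj'
        rw [choose_eq_zero_of_lt (not_lt.1 fun h => hj' ⟨h, hj.2⟩), mul_zero]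
  rw [sum_congr rfl fun i hi => congrArg _ (extend i hi)]
  simp only [mul_sum]
  rw [sum_comm]
  exact sum_congr rfl fun j _ => sum_range_choose_succ_mul_choose_mul_choose n m j

lemma sum_filter_choose_mul_choose_succ (m n : ℕ) :
    ∑ j ∈ (range n).filter p, (j + m).choose m * (n + m).choose (j + m + 1)
      = ∑ i ∈ range n, (i + m).choose m * ∑ j ∈ (range (i + 1)).filter p, i.choose j := by
  induction n with
  | zero => simp
  | succ n ih =>
    have pascal : ∀ j ∈ (range (n + 1)).filter p,
        (j + m).choose m * (n + 1 + m).choose (j + m + 1)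
          = (n + m).choose m * n.choose j + (j + m).choose m * (n + m).choose (j + m + 1) := by
      intro j _
      rw [add_right_comm, choose_succ_succ', mul_add, mul_comm, choose_mul (le_add_left m j),
        add_tsub_cancel_right, add_tsub_cancel_right]
    have top : ∑ j ∈ (range (n + 1)).filter p, (j + m).choose m * (n + m).choose (j + m + 1)
        = ∑ j ∈ (range n).filter p, (j + m).choose m * (n + m).choose (j + m + 1) := by
      rw [sum_filter, sum_filter, sum_range_succ, choose_eq_zero_of_lt (lt_add_one (n + m))]
      simp
    rw [sum_congr rfl pascal, sum_add_distrib, top, ih, sum_range_succ, ← mul_sum, add_comm]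

end Filter

lemma sum_range_filter_mod_two_choose (n r : ℕ) :
    ∑ j ∈ (range (n + 2)).filter (fun j => j % 2 = r % 2), (n + 1).choose j = 2 ^ n := by
  -- Pascal's rule splits `C(n+1, j)` between `j` and `j - 1`, which have opposite parities.
  have h := sum_choose_succ_mul (R := ℕ) (fun j _ => if j % 2 = r % 2 then 1 else 0) n
  simp only [cast_id, mul_ite, mul_one, mul_zero] at h
  rw [sum_filter, h, ← sum_range_choose, ← sum_add_distrib]
  refine sum_congr rfl fun j _ => ?_
  split_ifs <;> omega

end Nat

/-- For `n ≥ 2` and `m ≥ 1`,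
`∑_{i=1}^{n} C(n,i) ∑_{0 ≤ j ≤ i-1, j ≡ m (mod 2)} C(j+m-1, i-1) C(i-1, j)
  = ∑_{i=1}^{n-1} 2^{i-1} C(m+i-1, i) + ε`, where `ε = 1` if `m` is even, else `0`. -/
theorem rank_tau_eq (n m : ℕ) (hn : 2 ≤ n) (hm : 1 ≤ m) :
    ∑ i ∈ Finset.Icc 1 n, n.choose i *
        ∑ j ∈ (Finset.range i).filter (fun j => j % 2 = m % 2),
          (j + m - 1).choose (i - 1) * (i - 1).choose j
      = (∑ i ∈ Finset.Icc 1 (n - 1), 2 ^ (i - 1) * (m + i - 1).choose i)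
        + if Even m then 1 else 0 := by
  obtain ⟨m, rfl⟩ : ∃ m', m = m' + 1 := ⟨m - 1, by omega⟩
  obtain ⟨n, rfl⟩ : ∃ n', n = n' + 1 := ⟨n - 1, by omega⟩
  rw [sum_Icc_one_eq_sum_range]
  simp only [add_tsub_cancel_right, show ∀ j, j + (m + 1) - 1 = j + m from fun _ => rfl]
  rw [Nat.sum_choose_succ_mul_sum_filter_choose_mul_choose, Nat.sum_filter_choose_mul_choose_succ,
    sum_range_succ', sum_Icc_one_eq_sum_range]
  congr 1
  · refine sum_congr rfl fun k _ => ?_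
    rw [Nat.sum_range_filter_mod_two_choose, add_tsub_cancel_right, mul_comm,
      show m + 1 + (k + 1) - 1 = k + 1 + m by omega, Nat.choose_symm_add]
  · simp only [zero_add, range_one, filter_singleton, Nat.even_iff]
    split_ifs <;> simp_all
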